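/- arXiv:1909.08946 — 7 statements merged into one kernel-verified Lean document; each statement's English description precedes it below -/
import Mathlib

section
/- Let k be a commutative ring, λ ∈ k, Ω a semigroup, and let (R, {P_ω | ω ∈ Ω}) be a Rota–Baxter family algebra of weight λ over k. Let kΩ denote the (non-unital) semigroup algebra of Ω over k, and define the k-linear map P : R ⊗ kΩ → R ⊗ kΩ by P(x ⊗ ω) = P_ω(x) ⊗ ω for x ∈ R and ω ∈ Ω. Then P is a Rota–Baxter operator of weight λ on the algebra R ⊗ kΩ, i.e. P(u)P(v) = P(P(u)v + uP(v) + λuv) for all u, v ∈ R ⊗ kΩ. -/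
/-!
The Rota–Baxter defect `(u, v) ↦ Q u * Q v - Q (Q u * v + u * Q v + λ u v)` of a linear map `Q`
is bilinear, so it vanishes as soon as it vanishes on a spanning set. The pure tensors
`x ⊗ ω` span `R ⊗ kΩ`, and on them, since `(x ⊗ α)(y ⊗ β) = xy ⊗ αβ`, the defect of `Q` is the
defect of the family `P` at `(α, β)` tensored with `αβ`, which is zero.
-/

open scoped TensorProduct

section RotaBaxter

variable {k A : Type*} [CommRing k] [NonUnitalRing A] [Module k A] [IsScalarTower k A A]
  [SMulCommClass k A A]

def rotaBaxterDefect (lam : k) (Q : A →ₗ[k] A) : A →ₗ[k] A →ₗ[k] A :=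
  (LinearMap.mul k A).compl₁₂ Q Q -
    ((LinearMap.mul k A).compl₁₂ Q LinearMap.id + (LinearMap.mul k A).compl₁₂ LinearMap.id Q +
      lam • LinearMap.mul k A).compr₂ Q

theorem rotaBaxterDefect_apply (lam : k) (Q : A →ₗ[k] A) (u v : A) :
    rotaBaxterDefect lam Q u v = Q u * Q v - Q (Q u * v + u * Q v + lam • (u * v)) :=
  rfl

theorem rotaBaxter_of_span_eq_top {lam : k} {Q : A →ₗ[k] A} {s : Set A}
    (hs : Submodule.span k s = ⊤)
    (h : ∀ u ∈ s, ∀ v ∈ s, Q u * Q v = Q (Q u * v + u * Q v + lam • (u * v))) (u v : A) :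
    Q u * Q v = Q (Q u * v + u * Q v + lam • (u * v)) := by
  have hdefect : rotaBaxterDefect lam Q = 0 :=
    LinearMap.ext_on hs fun u hu => LinearMap.ext_on hs fun v hv => by
      simp [rotaBaxterDefect_apply, h u hu v hv]
  rw [← sub_eq_zero, ← rotaBaxterDefect_apply, hdefect, LinearMap.zero_apply,
    LinearMap.zero_apply]

end RotaBaxter

theorem TensorProduct.span_image2_tmul_eq_top {R M N : Type*} [CommSemiring R]
    [AddCommMonoid M] [AddCommMonoid N] [Module R M] [Module R N] {s : Set M} {t : Set N}
    (hs : Submodule.span R s = ⊤) (ht : Submodule.span R t = ⊤) :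
    Submodule.span R (Set.image2 (· ⊗ₜ[R] ·) s t) = ⊤ := by
  rw [← TensorProduct.map₂_mk_top_top_eq_top, ← hs, ← ht, Submodule.map₂_span_span]
  rfl

theorem MonoidAlgebra.span_tmul_single_one_eq_top (k M Ω : Type*) [CommSemiring k]
    [AddCommMonoid M] [Module k M] :
    Submodule.span k
      (Set.image2 (· ⊗ₜ[k] ·) Set.univ (Set.range fun ω : Ω => MonoidAlgebra.single ω (1 : k)))
      = (⊤ : Submodule k (M ⊗[k] MonoidAlgebra k Ω)) :=
  TensorProduct.span_image2_tmul_eq_top Submodule.span_univ (MonoidAlgebra.basis Ω k).span_eq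

/-- Let `k` be a commutative ring, `lam ∈ k`, `Ω` a semigroup, and
`(R, {P_ω | ω ∈ Ω})` a Rota–Baxter family algebra of weight `lam` over `k`.  Let `kΩ`
denote the (non-unital) semigroup algebra `MonoidAlgebra k Ω`, and let
`Q : R ⊗ kΩ → R ⊗ kΩ` be the `k`-linear map with `Q (x ⊗ ω) = P_ω(x) ⊗ ω`.
Then `Q` is a Rota–Baxter operator of weight `lam` on the algebra `R ⊗ kΩ`. -/
theorem rotaBaxterFamily_tensor_monoidAlgebra_isRotaBaxter
    {k R Ω : Type*} [CommRing k] [Ring R] [Algebra k R] [Semigroup Ω]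
    (lam : k) (P : Ω → R →ₗ[k] R)
    (hP : ∀ (α β : Ω) (a b : R),
      P α a * P β b = P (α * β) (P α a * b + a * P β b + lam • (a * b)))
    (Q : R ⊗[k] MonoidAlgebra k Ω →ₗ[k] R ⊗[k] MonoidAlgebra k Ω)
    (hQ : ∀ (x : R) (ω : Ω),
      Q (x ⊗ₜ[k] MonoidAlgebra.single ω (1 : k))
        = (P ω x) ⊗ₜ[k] MonoidAlgebra.single ω (1 : k)) :
    ∀ u v : R ⊗[k] MonoidAlgebra k Ω,
      Q u * Q v = Q (Q u * v + u * Q v + lam • (u * v)) := by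
  refine rotaBaxter_of_span_eq_top (MonoidAlgebra.span_tmul_single_one_eq_top k R Ω) ?_
  rintro _ ⟨x, -, _, ⟨α, rfl⟩, rfl⟩ _ ⟨y, -, _, ⟨β, rfl⟩, rfl⟩
  simp only [hQ, Algebra.TensorProduct.tmul_mul_tmul, MonoidAlgebra.single_mul_single, one_mul,
    TensorProduct.smul_tmul', ← TensorProduct.add_tmul, hP]
end

section
/- Let k be a commutative ring, λ ∈ k, Ω a semigroup, and let (R, {P_ω | ω ∈ Ω}) be a Rota–Baxter family algebra of weight λ. Define, for each ω ∈ Ω, binary operations on R by x ≺_ω y := xP_ω(y) + λxy and x ≻_ω y := P_ω(x)y. Then for all x, y, z ∈ R and α, β ∈ Ω one has (x ≺_α y) ≺_β z = x ≺_{αβ} (y ≺_β z + y ≻_α z). -/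
/-- For a Rota–Baxter family algebra `(R, {P_ω})` of weight `lam`, the
operations `x ≺_ω y := x P_ω(y) + lam x y` and `x ≻_ω y := P_ω(x) y` satisfy the first
dendriform family identity `(x ≺_α y) ≺_β z = x ≺_{αβ} (y ≺_β z + y ≻_α z)`. -/
theorem rotaBaxterFamily_dendriform_first
    {k R Ω : Type*} [CommRing k] [Ring R] [Algebra k R] [Semigroup Ω]
    (lam : k) (P : Ω → R →ₗ[k] R)
    (hP : ∀ (α β : Ω) (a b : R),
      P α a * P β b = P (α * β) (P α a * b + a * P β b + lam • (a * b)))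
    (prec succ : Ω → R → R → R)
    (hprec : ∀ (ω : Ω) (x y : R), prec ω x y = x * P ω y + lam • (x * y))
    (hsucc : ∀ (ω : Ω) (x y : R), succ ω x y = P ω x * y) :
    ∀ (α β : Ω) (x y z : R),
      prec β (prec α x y) z = prec (α * β) x (prec β y z + succ α y z) := by
  intro α β x y z
  simp only [hprec, hsucc]
  rw [show y * P β z + lam • (y * z) + P α y * z
      = P α y * z + y * P β z + lam • (y * z) by abel, ← hP α β y z]
  simp only [smul_add, mul_add, add_mul, smul_mul_assoc, mul_smul_comm, mul_assoc, smul_smul]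
  abel
end

section
/- Let k be a commutative ring, λ ∈ k, Ω a semigroup, and let (R, {P_ω | ω ∈ Ω}) be a Rota–Baxter family algebra of weight λ. Define, for each ω ∈ Ω, binary operations on R by x ≺_ω y := xP_ω(y) + λxy and x ≻_ω y := P_ω(x)y. Then for all x, y, z ∈ R and α, β ∈ Ω one has (x ≺_β y + x ≻_α y) ≻_{αβ} z = x ≻_α (y ≻_β z). Consequently, together with the two other dendriform family identities, (R, {≺_ω, ≻_ω | ω ∈ Ω}) is a dendriform family algebra. -/
/-- For a Rota–Baxter family algebra `(R, {P_ω})` of weight `lam`, the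
operations `x ≺_ω y := x P_ω(y) + lam x y` and `x ≻_ω y := P_ω(x) y` satisfy the third
dendriform family identity `(x ≺_β y + x ≻_α y) ≻_{αβ} z = x ≻_α (y ≻_β z)`; consequently,
together with the two other dendriform family identities, `(R, {≺_ω, ≻_ω})` is a dendriform
family algebra. -/
theorem rotaBaxterFamily_dendriformFamily
    {k R Ω : Type*} [CommRing k] [Ring R] [Algebra k R] [Semigroup Ω]
    (lam : k) (P : Ω → R →ₗ[k] R)
    (hP : ∀ (α β : Ω) (a b : R),
      P α a * P β b = P (α * β) (P α a * b + a * P β b + lam • (a * b)))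
    (prec succ : Ω → R → R → R)
    (hprec : ∀ (ω : Ω) (x y : R), prec ω x y = x * P ω y + lam • (x * y))
    (hsucc : ∀ (ω : Ω) (x y : R), succ ω x y = P ω x * y) :
    ∀ (α β : Ω) (x y z : R),
      succ (α * β) (prec β x y + succ α x y) z = succ α x (succ β y z) ∧
      prec β (prec α x y) z = prec (α * β) x (prec β y z + succ α y z) ∧
      prec β (succ α x y) z = succ α x (prec β y z) := by
  intro α β x y z
  refine ⟨?_, ?_, ?_⟩
  · simp only [hprec, hsucc]
    have h1 : x * P β y + lam • (x * y) + P α x * y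
        = P α x * y + x * P β y + lam • (x * y) := by abel
    rw [h1, ← hP α β x y]
    noncomm_ring
  · simp only [hprec, hsucc]
    have h2 : y * P β z + lam • (y * z) + P α y * z
        = P α y * z + y * P β z + lam • (y * z) := by abel
    rw [h2, ← hP α β y z]
    simp only [map_add, map_smul, mul_add, add_mul, smul_mul_assoc, mul_smul_comm, smul_add,
      mul_assoc, smul_smul]
    ring_nf
    abel
  · simp only [hprec, hsucc]
    noncomm_ring
end

section
/- Let k be a commutative ring, λ ∈ k, Ω a semigroup, and let (R, {P_ω | ω ∈ Ω}) be a Rota–Baxter family algebra of weight λ. Define, for each ω ∈ Ω, binary operations on R by x ≺_ω y := xP_ω(y), x ≻_ω y := P_ω(x)y, and x · y := λxy. Then (R, {≺_ω, ≻_ω | ω ∈ Ω}, ·) is a tridendriform family algebra, i.e. the seven tridendriform family identities hold. -/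
/-- For a Rota–Baxter family algebra `(R, {P_ω})` of weight `lam`, the
operations `x ≺_ω y := x P_ω(y)`, `x ≻_ω y := P_ω(x) y` and `x · y := lam x y` make `R` a
tridendriform family algebra: the seven tridendriform family identities hold. -/
theorem rotaBaxterFamily_tridendriformFamily
    {k R Ω : Type*} [CommRing k] [Ring R] [Algebra k R] [Semigroup Ω]
    (lam : k) (P : Ω → R →ₗ[k] R)
    (hP : ∀ (α β : Ω) (a b : R),
      P α a * P β b = P (α * β) (P α a * b + a * P β b + lam • (a * b)))
    (prec succ : Ω → R → R → R) (dot : R → R → R)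
    (hprec : ∀ (ω : Ω) (x y : R), prec ω x y = x * P ω y)
    (hsucc : ∀ (ω : Ω) (x y : R), succ ω x y = P ω x * y)
    (hdot : ∀ x y : R, dot x y = lam • (x * y)) :
    ∀ (α β : Ω) (x y z : R),
      prec β (prec α x y) z = prec (α * β) x (prec β y z + succ α y z + dot y z) ∧
      prec β (succ α x y) z = succ α x (prec β y z) ∧
      succ (α * β) (prec β x y + succ α x y + dot x y) z = succ α x (succ β y z) ∧
      dot (succ α x y) z = succ α x (dot y z) ∧
      dot (prec α x y) z = dot x (succ α y z) ∧
      prec α (dot x y) z = dot x (prec α y z) ∧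
      dot (dot x y) z = dot x (dot y z) := by
  intro α β x y z
  simp only [hprec, hsucc, hdot]
  refine ⟨?_, ?_, ?_, ?_, ?_, ?_, ?_⟩
  · rw [mul_assoc, hP α β y z]
    congr 1
    simp only [map_add, map_smul]
    abel
  · rw [mul_assoc]
  · rw [show x * P β y + P α x * y + lam • (x * y)
        = P α x * y + x * P β y + lam • (x * y) by abel, ← hP α β x y, mul_assoc]
  · simp [mul_smul_comm, smul_mul_assoc, mul_assoc]
  · simp [mul_smul_comm, smul_mul_assoc, mul_assoc]
  · simp [mul_smul_comm, smul_mul_assoc, mul_assoc]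
  · simp [mul_smul_comm, smul_mul_assoc, mul_assoc, smul_smul]
end

section
/- Let k be a commutative ring and Ω a semigroup. Let (T, {≺_ω, ≻_ω | ω ∈ Ω}, ·) be a tridendriform family algebra over k. Define new operations on T by x ≺'_ω y := x ≺_ω y + x·y and x ≻'_ω y := x ≻_ω y for ω ∈ Ω. Then (T, {≺'_ω, ≻'_ω | ω ∈ Ω}) is a dendriform family algebra. -/
/-- Let `(T, {≺_ω, ≻_ω}, ·)` be a tridendriform family algebra over a
commutative ring `k`, indexed by a semigroup `Ω`.  Then the operations
`x ≺'_ω y := x ≺_ω y + x·y` and `x ≻'_ω y := x ≻_ω y` make `T` a dendriform family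
algebra. -/
theorem tridendriformFamily_to_dendriformFamily
    {k T Ω : Type*} [CommRing k] [AddCommGroup T] [Module k T] [Semigroup Ω]
    (prec succ : Ω → T →ₗ[k] T →ₗ[k] T) (dot : T →ₗ[k] T →ₗ[k] T)
    (h1 : ∀ (α β : Ω) (x y z : T),
      prec β (prec α x y) z = prec (α * β) x (prec β y z + succ α y z + dot y z))
    (h2 : ∀ (α β : Ω) (x y z : T),
      prec β (succ α x y) z = succ α x (prec β y z))
    (h3 : ∀ (α β : Ω) (x y z : T),
      succ (α * β) (prec β x y + succ α x y + dot x y) z = succ α x (succ β y z))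
    (h4 : ∀ (α : Ω) (x y z : T), dot (succ α x y) z = succ α x (dot y z))
    (h5 : ∀ (α : Ω) (x y z : T), dot (prec α x y) z = dot x (succ α y z))
    (h6 : ∀ (α : Ω) (x y z : T), prec α (dot x y) z = dot x (prec α y z))
    (h7 : ∀ x y z : T, dot (dot x y) z = dot x (dot y z))
    (prec' succ' : Ω → T → T → T)
    (hp' : ∀ (ω : Ω) (x y : T), prec' ω x y = prec ω x y + dot x y)
    (hs' : ∀ (ω : Ω) (x y : T), succ' ω x y = succ ω x y) :
    ∀ (α β : Ω) (x y z : T),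
      prec' β (prec' α x y) z = prec' (α * β) x (prec' β y z + succ' α y z) ∧
      prec' β (succ' α x y) z = succ' α x (prec' β y z) ∧
      succ' (α * β) (prec' β x y + succ' α x y) z = succ' α x (succ' β y z) := by
  intro α β x y z
  refine ⟨?_, ?_, ?_⟩
  · simp only [hp', hs', map_add, LinearMap.add_apply, h1, h5, h6, h7]
    abel
  · simp only [hp', hs', map_add, LinearMap.add_apply, h2, h4]
  · simp only [hp', hs', ← h3]
    congr 1
    simp only [map_add, LinearMap.add_apply]
    abel
end

section
/- Let k be a commutative ring and Ω a semigroup. Let (D, {≺_ω, ≻_ω | ω ∈ Ω}) be a dendriform family algebra over k. Define bilinear operations on D ⊗ kΩ by (x ⊗ α) ≺ (y ⊗ β) := (x ≺_β y) ⊗ αβ and (x ⊗ α) ≻ (y ⊗ β) := (x ≻_α y) ⊗ αβ for x, y ∈ D and α, β ∈ Ω. Then (D ⊗ kΩ, ≺, ≻) is a dendriform algebra, i.e. for all u, v, w ∈ D ⊗ kΩ: (u ≺ v) ≺ w = u ≺ (v ≺ w + v ≻ w), (u ≻ v) ≺ w = u ≻ (v ≺ w), and (u ≺ v + u ≻ v)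 ≻ w = u ≻ (v ≻ w). -/
open scoped TensorProduct

/-! Each dendriform identity on `D ⊗ kΩ` compares two trilinear maps, and trilinear maps out of
`D ⊗ kΩ` are determined by their values on the generators `x ⊗ α`. On generators each identity
is the corresponding family axiom tensored with `(αβ)γ = α(βγ)`. -/

section TensorFinsupp

variable {k D Ω P : Type*} [CommSemiring k] [AddCommMonoid D] [Module k D]
  [AddCommMonoid P] [Module k P]

theorem lhom_ext_tmul_single {f g : D ⊗[k] (Ω →₀ k) →ₗ[k] P}
    (h : ∀ (x : D) (α : Ω), f (x ⊗ₜ Finsupp.single α 1) = g (x ⊗ₜ Finsupp.single α 1)) :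
    f = g :=
  TensorProduct.ext <| LinearMap.ext fun x =>
    Finsupp.lhom_ext' fun α => LinearMap.ext_ring (h x α)

theorem trilinear_ext_tmul_single
    {f g : D ⊗[k] (Ω →₀ k) →ₗ[k] D ⊗[k] (Ω →₀ k) →ₗ[k] D ⊗[k] (Ω →₀ k) →ₗ[k] P}
    (h : ∀ (x y z : D) (α β γ : Ω),
      f (x ⊗ₜ Finsupp.single α 1) (y ⊗ₜ Finsupp.single β 1) (z ⊗ₜ Finsupp.single γ 1) =
        g (x ⊗ₜ Finsupp.single α 1) (y ⊗ₜ Finsupp.single β 1) (z ⊗ₜ Finsupp.single γ 1)) :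
    f = g :=
  lhom_ext_tmul_single fun x α => lhom_ext_tmul_single fun y β =>
    lhom_ext_tmul_single fun z γ => h x y z α β γ

end TensorFinsupp

/-- Let `(D, {≺_ω, ≻_ω | ω ∈ Ω})` be a dendriform family algebra over a
commutative ring `k`, `Ω` a semigroup, and let `kΩ := Ω →₀ k` be the free `k`-module on
`Ω`.  The bilinear operations on `D ⊗ kΩ` determined by
`(x ⊗ α) ≺ (y ⊗ β) := (x ≺_β y) ⊗ αβ` and `(x ⊗ α) ≻ (y ⊗ β) := (x ≻_α y) ⊗ αβ`
make `D ⊗ kΩ` a dendriform algebra. -/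
theorem dendriformFamily_tensor_dendriform
    {k D Ω : Type*} [CommRing k] [AddCommGroup D] [Module k D] [Semigroup Ω]
    (prec succ : Ω → D →ₗ[k] D →ₗ[k] D)
    (h1 : ∀ (α β : Ω) (x y z : D),
      prec β (prec α x y) z = prec (α * β) x (prec β y z + succ α y z))
    (h2 : ∀ (α β : Ω) (x y z : D),
      prec β (succ α x y) z = succ α x (prec β y z))
    (h3 : ∀ (α β : Ω) (x y z : D),
      succ (α * β) (prec β x y + succ α x y) z = succ α x (succ β y z))
    (Prec Succ : (D ⊗[k] (Ω →₀ k)) →ₗ[k] (D ⊗[k] (Ω →₀ k)) →ₗ[k] (D ⊗[k] (Ω →₀ k)))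
    (hPrec : ∀ (x y : D) (α β : Ω),
      Prec (x ⊗ₜ[k] Finsupp.single α 1) (y ⊗ₜ[k] Finsupp.single β 1)
        = (prec β x y) ⊗ₜ[k] Finsupp.single (α * β) 1)
    (hSucc : ∀ (x y : D) (α β : Ω),
      Succ (x ⊗ₜ[k] Finsupp.single α 1) (y ⊗ₜ[k] Finsupp.single β 1)
        = (succ α x y) ⊗ₜ[k] Finsupp.single (α * β) 1) :
    ∀ u v w : D ⊗[k] (Ω →₀ k),
      Prec (Prec u v) w = Prec u (Prec v w + Succ v w) ∧
      Prec (Succ u v) w = Succ u (Prec v w) ∧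
      Succ (Prec u v + Succ u v) w = Succ u (Succ v w) := by
  -- `((comp.comp Q).compl₂ B) u v w = Q u (B v w)`
  let comp := LinearMap.llcomp k (D ⊗[k] (Ω →₀ k)) (D ⊗[k] (Ω →₀ k)) (D ⊗[k] (Ω →₀ k))
    (σ₁₂ := RingHom.id k) (σ₂₃ := RingHom.id k)
  have e1 : Prec.compr₂ Prec = (comp.comp Prec).compl₂ (Prec + Succ) :=
    trilinear_ext_tmul_single fun x y z α β γ => by
      simp [comp, hPrec, hSucc, ← TensorProduct.add_tmul, h1, mul_assoc]
  have e2 : Succ.compr₂ Prec = (comp.comp Succ).compl₂ Prec :=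
    trilinear_ext_tmul_single fun x y z α β γ => by simp [comp, hPrec, hSucc, h2, mul_assoc]
  have e3 : (Prec + Succ).compr₂ Succ = (comp.comp Succ).compl₂ Succ :=
    trilinear_ext_tmul_single fun x y z α β γ => by
      simp [comp, hPrec, hSucc, ← TensorProduct.add_tmul, ← h3, mul_assoc]
  intro u v w
  exact ⟨by simpa [comp] using congr($e1 u v w), by simpa [comp] using congr($e2 u v w),
    by simpa [comp] using congr($e3 u v w)⟩
end

section
/- Let k be a commutative ring and Ω a semigroup. Let (T, {≺_ω, ≻_ω | ω ∈ Ω}, ·) be a tridendriform family algebra over k. Define bilinear operations on T ⊗ kΩ by (x ⊗ α) ≺ (y ⊗ β) := (x ≺_β y) ⊗ αβ, (x ⊗ α) ≻ (y ⊗ β) := (x ≻_α y) ⊗ αβ, and (x ⊗ α) • (y ⊗ β) := (x·y) ⊗ αβ for x, y ∈ T and α, β ∈ Ω. Then (T ⊗ kΩ, ≺, ≻, •) is a tridendriform algebra, i.e. for all u, v, w ∈ T ⊗ kΩ: (u ≺ v) ≺ w = u ≺ (v ≺ w + v ≻ w + v • w), (u ≻ v) ≺ w = u ≻ (v ≺ w),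 (u ≺ v + u ≻ v + u • v) ≻ w = u ≻ (v ≻ w), (u ≻ v) • w = u ≻ (v • w), (u ≺ v) • w = u • (v ≻ w), (u • v) ≺ w = u • (v ≺ w), and (u • v) • w = u • (v • w). -/
/-!
Each of the seven identities has the shape `B (A u v) w = C u (D v w)` with bilinear `A, B, C, D`,
so both sides are trilinear in `(u, v, w)` and it suffices to compare them on the spanning family
`x ⊗ α`. There the identity is the corresponding family identity in `T`, tensored with
`(αβ)γ = α(βγ)` in `Ω`.
-/

open scoped TensorProduct

open Submodule in
theorem TensorProduct.span_range_tmul_eq_top {R M N ι κ : Type*} [CommSemiring R]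
    [AddCommMonoid M] [Module R M] [AddCommMonoid N] [Module R N] {v : ι → M} {w : κ → N}
    (hv : span R (Set.range v) = ⊤) (hw : span R (Set.range w) = ⊤) :
    span R (Set.range fun p : ι × κ ↦ v p.1 ⊗ₜ[R] w p.2) = ⊤ := by
  have := map₂_span_span R (TensorProduct.mk R M N) (Set.range v) (Set.range w)
  rw [hv, hw, TensorProduct.map₂_mk_top_top_eq_top] at this
  rw [← Set.image2_range, this]
  rfl

section

variable {R M₁ M₂ M₃ N : Type*} [CommSemiring R]
  [AddCommMonoid M₁] [Module R M₁] [AddCommMonoid M₂] [Module R M₂]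
  [AddCommMonoid M₃] [Module R M₃] [AddCommMonoid N] [Module R N]
  {ι₁ ι₂ ι₃ : Type*} {v₁ : ι₁ → M₁} {v₂ : ι₂ → M₂} {v₃ : ι₃ → M₃}

theorem LinearMap.ext_on_range₃ (h₁ : Submodule.span R (Set.range v₁) = ⊤)
    (h₂ : Submodule.span R (Set.range v₂) = ⊤) (h₃ : Submodule.span R (Set.range v₃) = ⊤)
    {f g : M₁ →ₗ[R] M₂ →ₗ[R] M₃ →ₗ[R] N}
    (h : ∀ i j l, f (v₁ i) (v₂ j) (v₃ l) = g (v₁ i) (v₂ j) (v₃ l)) :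
    f = g :=
  LinearMap.ext_on_range h₁ fun i ↦ LinearMap.ext_on_range h₂ fun j ↦
    LinearMap.ext_on_range h₃ fun l ↦ h i j l

theorem LinearMap.apply_apply_eq_of_span_eq_top {P Q : Type*} [AddCommMonoid P] [Module R P]
    [AddCommMonoid Q] [Module R Q] (h₁ : Submodule.span R (Set.range v₁) = ⊤)
    (h₂ : Submodule.span R (Set.range v₂) = ⊤) (h₃ : Submodule.span R (Set.range v₃) = ⊤)
    {A : M₁ →ₗ[R] M₂ →ₗ[R] P} {B : P →ₗ[R] M₃ →ₗ[R] N}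
    {C : M₁ →ₗ[R] Q →ₗ[R] N} {D : M₂ →ₗ[R] M₃ →ₗ[R] Q}
    (h : ∀ i j l, B (A (v₁ i) (v₂ j)) (v₃ l) = C (v₁ i) (D (v₂ j) (v₃ l)))
    (x : M₁) (y : M₂) (z : M₃) :
    B (A x y) z = C x (D y z) := by
  have := LinearMap.ext_on_range₃ h₁ h₂ h₃ (f := A.compr₂ B)
    (g := (LinearMap.llcomp R _ _ _ ∘ₗ C).compl₂ D) h
  exact congr($this x y z)

end

/-- Let `(T, {≺_ω, ≻_ω | ω ∈ Ω}, ·)` be a tridendriform family algebra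
over a commutative ring `k`, `Ω` a semigroup, and let `kΩ := Ω →₀ k` be the free
`k`-module on `Ω`.  The bilinear operations on `T ⊗ kΩ` determined by
`(x ⊗ α) ≺ (y ⊗ β) := (x ≺_β y) ⊗ αβ`, `(x ⊗ α) ≻ (y ⊗ β) := (x ≻_α y) ⊗ αβ` and
`(x ⊗ α) • (y ⊗ β) := (x·y) ⊗ αβ` make `T ⊗ kΩ` a tridendriform algebra. -/
theorem tridendriformFamily_tensor_tridendriform
    {k T Ω : Type*} [CommRing k] [AddCommGroup T] [Module k T] [Semigroup Ω]
    (prec succ : Ω → T →ₗ[k] T →ₗ[k] T) (dot : T →ₗ[k] T →ₗ[k] T)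
    (h1 : ∀ (α β : Ω) (x y z : T),
      prec β (prec α x y) z = prec (α * β) x (prec β y z + succ α y z + dot y z))
    (h2 : ∀ (α β : Ω) (x y z : T),
      prec β (succ α x y) z = succ α x (prec β y z))
    (h3 : ∀ (α β : Ω) (x y z : T),
      succ (α * β) (prec β x y + succ α x y + dot x y) z = succ α x (succ β y z))
    (h4 : ∀ (α : Ω) (x y z : T), dot (succ α x y) z = succ α x (dot y z))
    (h5 : ∀ (α : Ω) (x y z : T), dot (prec α x y) z = dot x (succ α y z))
    (h6 : ∀ (α : Ω) (x y z : T), prec α (dot x y) z = dot x (prec α y z))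
    (h7 : ∀ x y z : T, dot (dot x y) z = dot x (dot y z))
    (Prec Succ Dot :
      (T ⊗[k] (Ω →₀ k)) →ₗ[k] (T ⊗[k] (Ω →₀ k)) →ₗ[k] (T ⊗[k] (Ω →₀ k)))
    (hPrec : ∀ (x y : T) (α β : Ω),
      Prec (x ⊗ₜ[k] Finsupp.single α 1) (y ⊗ₜ[k] Finsupp.single β 1)
        = (prec β x y) ⊗ₜ[k] Finsupp.single (α * β) 1)
    (hSucc : ∀ (x y : T) (α β : Ω),
      Succ (x ⊗ₜ[k] Finsupp.single α 1) (y ⊗ₜ[k] Finsupp.single β 1)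
        = (succ α x y) ⊗ₜ[k] Finsupp.single (α * β) 1)
    (hDot : ∀ (x y : T) (α β : Ω),
      Dot (x ⊗ₜ[k] Finsupp.single α 1) (y ⊗ₜ[k] Finsupp.single β 1)
        = (dot x y) ⊗ₜ[k] Finsupp.single (α * β) 1) :
    ∀ u v w : T ⊗[k] (Ω →₀ k),
      Prec (Prec u v) w = Prec u (Prec v w + Succ v w + Dot v w) ∧
      Prec (Succ u v) w = Succ u (Prec v w) ∧
      Succ (Prec u v + Succ u v + Dot u v) w = Succ u (Succ v w) ∧
      Dot (Succ u v) w = Succ u (Dot v w) ∧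
      Dot (Prec u v) w = Dot u (Succ v w) ∧
      Prec (Dot u v) w = Dot u (Prec v w) ∧
      Dot (Dot u v) w = Dot u (Dot v w) := by
  have hspan : Submodule.span k
      (Set.range fun p : T × Ω ↦ p.1 ⊗ₜ[k] Finsupp.single p.2 (1 : k)) = ⊤ :=
    TensorProduct.span_range_tmul_eq_top (v := id) (w := fun α ↦ Finsupp.single α (1 : k))
      (by rw [Set.range_id, Submodule.span_univ])
      (by rw [← Finsupp.coe_basisSingleOne]; exact Finsupp.basisSingleOne.span_eq)
  have hSum : ∀ (x y : T) (α β : Ω),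
      (Prec + Succ + Dot) (x ⊗ₜ[k] Finsupp.single α 1) (y ⊗ₜ[k] Finsupp.single β 1)
        = (prec β x y + succ α x y + dot x y) ⊗ₜ[k] Finsupp.single (α * β) 1 := by
    intro x y α β
    simp only [LinearMap.add_apply, hPrec, hSucc, hDot, TensorProduct.add_tmul]
  have key {A B C D : T ⊗[k] (Ω →₀ k) →ₗ[k] T ⊗[k] (Ω →₀ k) →ₗ[k] T ⊗[k] (Ω →₀ k)} :=
    LinearMap.apply_apply_eq_of_span_eq_top hspan hspan hspan (A := A) (B := B) (C := C) (D := D)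
  refine fun u v w ↦ ⟨?_, ?_, ?_, ?_, ?_, ?_, ?_⟩
  · exact key (D := Prec + Succ + Dot)
      (fun ⟨x, α⟩ ⟨y, β⟩ ⟨z, γ⟩ ↦ by simp only [hPrec, hSum, h1, mul_assoc]) u v w
  · exact key (fun ⟨x, α⟩ ⟨y, β⟩ ⟨z, γ⟩ ↦ by simp only [hPrec, hSucc, h2, mul_assoc]) u v w
  · exact key (A := Prec + Succ + Dot)
      (fun ⟨x, α⟩ ⟨y, β⟩ ⟨z, γ⟩ ↦ by simp only [hSucc, hSum, h3, mul_assoc]) u v w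
  · exact key (fun ⟨x, α⟩ ⟨y, β⟩ ⟨z, γ⟩ ↦ by simp only [hSucc, hDot, h4, mul_assoc]) u v w
  · exact key (fun ⟨x, α⟩ ⟨y, β⟩ ⟨z, γ⟩ ↦ by simp only [hPrec, hSucc, hDot, h5, mul_assoc]) u v w
  · exact key (fun ⟨x, α⟩ ⟨y, β⟩ ⟨z, γ⟩ ↦ by simp only [hPrec, hDot, h6, mul_assoc]) u v w
  · exact key (fun ⟨x, α⟩ ⟨y, β⟩ ⟨z, γ⟩ ↦ by simp only [hDot, h7, mul_assoc]) u v w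
end
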